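/- Define, for θ0 ∈ [0, π), T(θ0) = ∫_{θ0}^{π} √((1 − cos θ)/(cos θ0 − cos θ)) dθ. Then for all θ0, θ1 ∈ [0, π) one has T(θ0) = T(θ1). -/

import Mathlib

open Real intervalIntegral

noncomputable def T (θ0 : ℝ) : ℝ :=
  ∫ θ in θ0..Real.pi,
    Real.sqrt ((1 - Real.cos θ) / (Real.cos θ0 - Real.cos θ))

/-!
With the half-angle formulas `1 - cos θ = 2 sin² (θ/2)` and
`cos θ0 - cos θ = 2 (c² - cos² (θ/2))`, where `c = cos (θ0/2)`, the integrand becomes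
`sin (θ/2) / √(c² - cos² (θ/2))`, which is the derivative of `-2 arcsin (cos (θ/2) / c)`.
Its increment from `θ0` to `π` is `2 arcsin 1 - 2 arcsin 0 = π`, whatever `θ0`.
-/

open Set

namespace intervalIntegral

theorem integral_eq_sub_of_hasDerivAt_of_nonneg {F f : ℝ → ℝ} {a b : ℝ} (hab : a ≤ b)
    (hcont : ContinuousOn F (Icc a b)) (hderiv : ∀ x ∈ Ioo a b, HasDerivAt F (f x) x)
    (hnonneg : ∀ x ∈ Ioo a b, 0 ≤ f x) : ∫ x in a..b, f x = F b - F a :=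
  integral_eq_sub_of_hasDerivAt_of_le hab hcont hderiv <|
    (intervalIntegrable_iff_integrableOn_Ioc_of_le hab).2 <|
      integrableOn_deriv_of_nonneg hcont hderiv hnonneg

end intervalIntegral

-- Valid for all `θ0, θ`: where the denominators vanish both sides are `0` (`x / 0 = 0`).
theorem sqrt_one_sub_cos_div_cos_sub_cos (θ0 θ : ℝ) :
    √((1 - cos θ) / (cos θ0 - cos θ))
      = |sin (θ / 2)| / √(cos (θ0 / 2) ^ 2 - cos (θ / 2) ^ 2) := by
  have hcos (x : ℝ) : cos x = 2 * cos (x / 2) ^ 2 - 1 := by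
    rw [← cos_two_mul, mul_div_cancel₀ x two_ne_zero]
  have hfrac : (1 - cos θ) / (cos θ0 - cos θ)
      = sin (θ / 2) ^ 2 / (cos (θ0 / 2) ^ 2 - cos (θ / 2) ^ 2) := by
    rw [hcos θ, hcos θ0, sin_sq,
      show 1 - (2 * cos (θ / 2) ^ 2 - 1) = 2 * (1 - cos (θ / 2) ^ 2) by ring,
      show 2 * cos (θ0 / 2) ^ 2 - 1 - (2 * cos (θ / 2) ^ 2 - 1)
        = 2 * (cos (θ0 / 2) ^ 2 - cos (θ / 2) ^ 2) by ring,
      mul_div_mul_left _ _ two_ne_zero]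
  rw [hfrac, sqrt_div (sq_nonneg _), sqrt_sq_eq_abs]

theorem hasDerivAt_arcsin_cos_half_div {c θ : ℝ} (hc : 0 < c) (hθ : |cos (θ / 2)| < c) :
    HasDerivAt (fun θ => -2 * arcsin (cos (θ / 2) / c))
      (sin (θ / 2) / √(c ^ 2 - cos (θ / 2) ^ 2)) θ := by
  have hu : |cos (θ / 2) / c| < 1 := by rwa [abs_div, abs_of_pos hc, div_lt_one hc]
  obtain ⟨hu₁, hu₂⟩ := abs_lt.1 hu
  have hhalf : HasDerivAt (fun θ : ℝ => cos (θ / 2) / c) (-sin (θ / 2) * (1 / 2) / c) θ :=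
    ((hasDerivAt_cos _).comp θ ((hasDerivAt_id θ).div_const 2)).div_const c
  refine (((hasDerivAt_arcsin hu₁.ne' hu₂.ne).comp θ hhalf).const_mul (-2)).congr_deriv ?_
  have hpos : 0 < c ^ 2 - cos (θ / 2) ^ 2 := by
    nlinarith [sq_abs (cos (θ / 2)), abs_nonneg (cos (θ / 2))]
  have hsqrt : √(1 - (cos (θ / 2) / c) ^ 2) = √(c ^ 2 - cos (θ / 2) ^ 2) / c := by
    rw [show 1 - (cos (θ / 2) / c) ^ 2 = (c ^ 2 - cos (θ / 2) ^ 2) / c ^ 2 by field_simp,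
      sqrt_div hpos.le, sqrt_sq hc.le]
  rw [hsqrt]
  field_simp

theorem T_eq_pi {θ0 : ℝ} (h00 : 0 ≤ θ0) (h01 : θ0 < π) : T θ0 = π := by
  set c := cos (θ0 / 2)
  have hc : 0 < c := cos_pos_of_mem_Ioo ⟨by linarith [pi_pos], by linarith⟩
  have hintegrand : EqOn (fun θ => √((1 - cos θ) / (cos θ0 - cos θ)))
      (fun θ => sin (θ / 2) / √(c ^ 2 - cos (θ / 2) ^ 2)) (uIcc θ0 π) := by
    intro θ hθ
    rw [uIcc_of_le h01.le] at hθ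
    dsimp only
    rw [sqrt_one_sub_cos_div_cos_sub_cos,
      abs_of_nonneg (sin_nonneg_of_nonneg_of_le_pi (by linarith [hθ.1]) (by linarith [hθ.2]))]
  have hcont : Continuous fun θ => -2 * arcsin (cos (θ / 2) / c) := by fun_prop
  rw [T, integral_congr hintegrand,
    integral_eq_sub_of_hasDerivAt_of_nonneg h01.le hcont.continuousOn]
  · rw [cos_pi_div_two, zero_div, arcsin_zero, div_self hc.ne', arcsin_one]
    ring
  · intro θ ⟨h1, h2⟩
    refine hasDerivAt_arcsin_cos_half_div hc ?_
    rw [abs_of_pos (cos_pos_of_mem_Ioo ⟨by linarith [pi_pos], by linarith⟩)]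
    exact cos_lt_cos_of_nonneg_of_le_pi (by linarith) (by linarith) (by linarith)
  · intro θ ⟨h1, h2⟩
    exact div_nonneg (sin_nonneg_of_nonneg_of_le_pi (by linarith) (by linarith)) (sqrt_nonneg _)

theorem tautochrone_constant (θ0 θ1 : ℝ)
    (h00 : 0 ≤ θ0) (h01 : θ0 < Real.pi)
    (h10 : 0 ≤ θ1) (h11 : θ1 < Real.pi) :
    T θ0 = T θ1 := by
  rw [T_eq_pi h00 h01, T_eq_pi h10 h11]
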